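/- arXiv:1909.01796 — 6 statements merged into one kernel-verified Lean document; each statement's English description precedes it below -/
import Mathlib

section
/- For a simulation function f : X → Y between labelled transition systems, the induced presheaf map ⟦f⟧ on executions (given by postcomposition with f) is a bisimulation map (has the right lifting property against monomorphisms of presheaves over A* ordered by prefix) if and only if f is surjective and reflects transitions: whenever f(x) →^a y in Y, there exists x' ∈ X with x →^a x' and f(x') = y. -/
open CategoryTheory

variable {X Y A : Type}

/-- `s` is the list of states of an execution with trace `σ`. -/
def IsExec {X A : Type} (tr : X → A → X → Prop) (σ : List A) (s : List X) : Prop :=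
  s.length = σ.length + 1 ∧
  ∀ i (hi : i + 1 < s.length) (hσ : i < σ.length),
    tr (s[i]'(Nat.lt_of_succ_lt hi)) (σ[i]'hσ) (s[i + 1]'hi)

/-- The poset `(A*, ⪯)` of finite words under the prefix order. -/
instance wordOrder (A : Type) : PartialOrder (List A) where
  le a b := a <+: b
  le_refl a := List.prefix_refl a
  le_trans _ _ _ h1 h2 := List.IsPrefix.trans h1 h2
  le_antisymm _ _ h1 h2 :=
    List.IsPrefix.eq_of_length h1 (Nat.le_antisymm h1.length_le h2.length_le)

theorem wordLe_iff {A : Type} {a b : List A} : a ≤ b ↔ a <+: b := Iff.rfl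

theorem isExec_take {tr : X → A → X → Prop} {σ σ' : List A} {s : List X}
    (h : IsExec tr σ s) (hp : σ' <+: σ) :
    IsExec tr σ' (s.take (σ'.length + 1)) := by
  obtain ⟨hlen, htr⟩ := h
  have hle : σ'.length + 1 ≤ s.length := by
    have := hp.length_le; omega
  constructor
  · simp [List.length_take]; omega
  · intro i hi hσ
    have hi' : i + 1 < s.length := by
      simp [List.length_take] at hi; omega
    simp only [List.getElem_take]
    rw [hp.getElem]
    exact htr i hi' (lt_of_lt_of_le hσ hp.length_le)

theorem isExec_map {trX : X → A → X → Prop} {trY : Y → A → Y → Prop} {f : X → Y}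
    (hf : ∀ x a x', trX x a x' → trY (f x) a (f x'))
    {σ : List A} {s : List X} (h : IsExec trX σ s) :
    IsExec trY σ (s.map f) := by
  obtain ⟨hlen, htr⟩ := h
  constructor
  · simpa using hlen
  · intro i hi hσ
    simp only [List.getElem_map]
    exact hf _ _ _ (htr i (by simpa using hi) hσ)

/-- The execution presheaf `⟦X⟧` on the prefix-ordered free monoid: at `σ` it
consists of the executions with trace `σ`, with action by restriction. -/
def ExecPsh (tr : X → A → X → Prop) : (List A)ᵒᵖ ⥤ Type _ where
  obj σ := {s : List X // IsExec tr σ.unop s}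
  map {σ τ} g := TypeCat.ofHom fun s =>
    ⟨s.1.take ((τ.unop : List A).length + 1), isExec_take s.2 (leOfHom g.unop)⟩
  map_id := by
    intro σ; refine ConcreteCategory.hom_ext _ _ fun s => ?_; apply Subtype.ext
    exact List.take_of_length_le (le_of_eq s.2.1)
  map_comp := by
    intro σ τ ρ g h; refine ConcreteCategory.hom_ext _ _ fun s => ?_; apply Subtype.ext
    have hlen : (ρ.unop : List A).length + 1 ≤ (τ.unop : List A).length + 1 := by
      have := (wordLe_iff.mp (leOfHom h.unop)).length_le; omega
    simp [List.take_take, Nat.min_eq_left hlen]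

/-- The presheaf map induced by a simulation function (postcomposition). -/
def execPshMap {trX : X → A → X → Prop} {trY : Y → A → Y → Prop} (f : X → Y)
    (hf : ∀ x a x', trX x a x' → trY (f x) a (f x')) :
    ExecPsh trX ⟶ ExecPsh trY where
  app σ := TypeCat.ofHom fun s => ⟨s.1.map f, isExec_map hf s.2⟩
  naturality := by
    intro σ τ g; refine ConcreteCategory.hom_ext _ _ fun s => ?_; apply Subtype.ext
    exact List.map_take ..

open Opposite

theorem homEqAux {σ τ : (List A)ᵒᵖ} (u v : σ ⟶ τ) : u = v := by
  have : u.unop = v.unop := Subsingleton.elim _ _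
  exact Quiver.Hom.unop_inj this

/-- Lift of a length-one execution along a surjection. -/
noncomputable def liftNil (trX : X → A → X → Prop) (f : X → Y)
    (hs : Function.Surjective f) (σ : List A) (hσ : σ = [])
    (t : List Y) (ht : t.length = σ.length + 1) :
    {s : List X // IsExec trX σ s ∧ s.map f = t} := by
  subst hσ
  simp only [List.length_nil, Nat.zero_add] at ht
  have hex := List.length_eq_one_iff.mp ht
  set c := Classical.choose hex with hcdef
  have hc : t = [c] := Classical.choose_spec hex
  refine ⟨[Classical.choose (hs c)], ⟨by simp, ?_⟩, ?_⟩
  · intro i hi hσ'; simp at hσ'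
  · simp [hc, Classical.choose_spec (hs c)]

/-- One-step extension of a lifted execution, using transition reflection. -/
noncomputable def liftStep (trX : X → A → X → Prop) (trY : Y → A → Y → Prop)
    (f : X → Y)
    (hr : ∀ x a y, trY (f x) a y → ∃ x', trX x a x' ∧ f x' = y)
    (σ : List A) (hσ : σ ≠ [])
    (t : List Y) (ht : IsExec trY σ t)
    (s₀ : List X) (h₀ : IsExec trX σ.dropLast s₀)
    (hm : s₀.map f = t.take (σ.dropLast.length + 1)) :
    {s : List X // IsExec trX σ s ∧ s.map f = t ∧
      s.take (σ.dropLast.length + 1) = s₀} := by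
  have hσl : σ.length = σ.dropLast.length + 1 := by
    cases σ with
    | nil => exact absurd rfl hσ
    | cons b l => simp
  obtain ⟨htl, htt⟩ := ht
  obtain ⟨h₀l, h₀t⟩ := h₀
  have hlt1 : σ.dropLast.length < t.length := by omega
  have hlt2 : σ.dropLast.length + 1 < t.length := by omega
  have hs₀ne : s₀ ≠ [] := by
    intro h; rw [h] at h₀l; simp at h₀l
  -- the last state of s₀ maps to the corresponding state of t
  have hfl : f (s₀[σ.dropLast.length]'(by omega)) = t[σ.dropLast.length]'hlt1 := by
    have : (s₀.map f)[σ.dropLast.length]'(by simp; omega)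
        = (t.take (σ.dropLast.length + 1))[σ.dropLast.length]'(by simp; omega) := by
      congr 1
    simpa using this
  have htrY : trY (f (s₀[σ.dropLast.length]'(by omega)))
      (σ[σ.dropLast.length]'(by omega)) (t[σ.dropLast.length + 1]'hlt2) := by
    rw [hfl]
    exact htt σ.dropLast.length (by omega) (by omega)
  have hex := hr _ _ _ htrY
  have hx'1 := (Classical.choose_spec hex).1
  have hx'2 := (Classical.choose_spec hex).2
  refine ⟨s₀ ++ [Classical.choose hex], ⟨by simp; omega, ?_⟩, ?_, ?_⟩
  · intro i hi hσ'
    simp only [List.length_append, List.length_cons, List.length_nil] at hi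
    by_cases hcase : i + 1 < s₀.length
    · rw [List.getElem_append_left (by omega), List.getElem_append_left hcase]
      have hidl : i < σ.dropLast.length := by omega
      have : σ[i] = σ.dropLast[i]'(by simp; omega) := by
        simp
      rw [this]
      exact h₀t i hcase (by simp; omega)
    · have hieq : i = σ.dropLast.length := by omega
      subst hieq
      rw [List.getElem_append_left (by omega),
        List.getElem_append_right (by omega)]
      simpa [h₀l] using hx'1
  · rw [List.map_append, hm]
    simp only [List.map_cons, List.map_nil, hx'2]
    rw [List.take_concat_get' t _ hlt2]
    exact List.take_of_length_le (by omega)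
  · exact List.take_left' h₀l

open Classical in
/-- The recursively constructed lift of an element `q` of `Q` to an execution in `X`. -/
noncomputable def liftExec
    (trX : X → A → X → Prop) (trY : Y → A → Y → Prop) (f : X → Y)
    (hf : ∀ x a x', trX x a x' → trY (f x) a (f x'))
    (hs : Function.Surjective f)
    (hr : ∀ x a y, trY (f x) a y → ∃ x', trX x a x' ∧ f x' = y)
    {P Q : (List A)ᵒᵖ ⥤ Type} (g : P ⟶ Q)
    (m : P ⟶ ExecPsh trX) (n : Q ⟶ ExecPsh trY)
    (hsq : m ≫ execPshMap f hf = g ≫ n)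
    (σ : List A) (q : Q.obj (op σ)) :
    {s : List X // IsExec trX σ s ∧ s.map f = (n.app (op σ) q).1} :=
  if himg : ∃ p, g.app (op σ) p = q then
    ⟨(m.app (op σ) himg.choose).1, (m.app (op σ) himg.choose).2, by
      have h1 := congr_arg Subtype.val
        (ConcreteCategory.congr_hom (NatTrans.congr_app hsq (op σ)) himg.choose)
      exact h1.trans (congrArg (fun x => (n.app (op σ) x).1) himg.choose_spec)⟩
  else if hσ : σ = [] then
    liftNil trX f hs σ hσ (n.app (op σ) q).1 (n.app (op σ) q).2.1
  else
    have hlt : σ.dropLast.length < σ.length := by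
      cases σ with
      | nil => exact absurd rfl hσ
      | cons b l => simp
    let r := liftExec trX trY f hf hs hr g m n hsq σ.dropLast
      (Q.map (homOfLE (wordLe_iff.mpr σ.dropLast_prefix)).op q)
    let u := liftStep trX trY f hr σ hσ (n.app (op σ) q).1 (n.app (op σ) q).2
      r.1 r.2.1 (by
        have hnat := congr_arg Subtype.val (ConcreteCategory.congr_hom
          (n.naturality (homOfLE (wordLe_iff.mpr σ.dropLast_prefix)).op) q)
        rw [r.2.2]
        exact hnat)
    ⟨u.1, u.2.1, u.2.2.1⟩
termination_by σ.length

section LiftLemmas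

variable {trX : X → A → X → Prop} {trY : Y → A → Y → Prop} {f : X → Y}
    {hf : ∀ x a x', trX x a x' → trY (f x) a (f x')}
    {hs : Function.Surjective f}
    {hr : ∀ x a y, trY (f x) a y → ∃ x', trX x a x' ∧ f x' = y}
    {P Q : (List A)ᵒᵖ ⥤ Type} {g : P ⟶ Q}
    {m : P ⟶ ExecPsh trX} {n : Q ⟶ ExecPsh trY}
    {hsq : m ≫ execPshMap f hf = g ≫ n}

theorem liftExec_img (gi : ∀ σ', Function.Injective (g.app σ'))
    (σ : List A) (p : P.obj (op σ)) :
    (liftExec trX trY f hf hs hr g m n hsq σ (g.app (op σ) p)).1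
      = (m.app (op σ) p).1 := by
  rw [liftExec]
  have hc : ∃ p', g.app (op σ) p' = g.app (op σ) p := ⟨p, rfl⟩
  rw [dif_pos hc]
  have : hc.choose = p := gi _ hc.choose_spec
  show (m.app (op σ) hc.choose).1 = (m.app (op σ) p).1
  rw [this]

theorem liftExec_step (gi : ∀ σ', Function.Injective (g.app σ'))
    (σ : List A) (hσ : σ ≠ []) (q : Q.obj (op σ)) :
    (liftExec trX trY f hf hs hr g m n hsq σ.dropLast
        (Q.map (homOfLE (wordLe_iff.mpr σ.dropLast_prefix)).op q)).1
      = (liftExec trX trY f hf hs hr g m n hsq σ q).1.take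
          (σ.dropLast.length + 1) := by
  by_cases himg : ∃ p, g.app (op σ) p = q
  · obtain ⟨p, hp⟩ := himg
    subst hp
    have h1 : Q.map (homOfLE (wordLe_iff.mpr σ.dropLast_prefix)).op
          (g.app (op σ) p)
        = g.app (op σ.dropLast)
          (P.map (homOfLE (wordLe_iff.mpr σ.dropLast_prefix)).op p) :=
      (ConcreteCategory.congr_hom (g.naturality (homOfLE (wordLe_iff.mpr σ.dropLast_prefix)).op)
        p).symm
    rw [h1, liftExec_img gi, liftExec_img gi]
    have h2 := congr_arg Subtype.val (ConcreteCategory.congr_hom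
      (m.naturality (homOfLE (wordLe_iff.mpr σ.dropLast_prefix)).op) p)
    exact h2
  · conv_rhs => rw [liftExec]
    rw [dif_neg himg, dif_neg hσ]
    exact ((liftStep _ _ _ _ _ _ _ _ _ _ _).2.2.2).symm

end LiftLemmas

section LiftNat

variable {trX : X → A → X → Prop} {trY : Y → A → Y → Prop} {f : X → Y}
    {hf : ∀ x a x', trX x a x' → trY (f x) a (f x')}
    {hs : Function.Surjective f}
    {hr : ∀ x a y, trY (f x) a y → ∃ x', trX x a x' ∧ f x' = y}
    {P Q : (List A)ᵒᵖ ⥤ Type} {g : P ⟶ Q}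
    {m : P ⟶ ExecPsh trX} {n : Q ⟶ ExecPsh trY}
    {hsq : m ≫ execPshMap f hf = g ≫ n}

theorem liftExec_nat (gi : ∀ σ', Function.Injective (g.app σ')) :
    ∀ (N : ℕ) (σ : List A), σ.length ≤ N → ∀ (τ : List A) (hle : τ ≤ σ)
      (q : Q.obj (op σ)),
    (liftExec trX trY f hf hs hr g m n hsq τ (Q.map (homOfLE hle).op q)).1
      = (liftExec trX trY f hf hs hr g m n hsq σ q).1.take (τ.length + 1) := by
  intro N
  induction N with
  | zero =>
    intro σ hN τ hle q
    have hσ : σ = [] := List.length_eq_zero_iff.mp (Nat.le_zero.mp hN)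
    subst hσ
    have hτ : τ = [] := List.prefix_nil.mp (wordLe_iff.mp hle)
    subst hτ
    have he : (homOfLE hle).op = 𝟙 (op ([] : List A)) := homEqAux _ _
    rw [he, Q.map_id, types_id_apply]
    rw [List.take_of_length_le
      (le_of_eq (liftExec trX trY f hf hs hr g m n hsq [] q).2.1.1)]
  | succ N ih =>
    intro σ hN τ hle q
    by_cases hτσ : τ = σ
    · subst hτσ
      have he : (homOfLE hle).op = 𝟙 (op τ) := homEqAux _ _
      rw [he, Q.map_id, types_id_apply]
      rw [List.take_of_length_le
        (le_of_eq (liftExec trX trY f hf hs hr g m n hsq τ q).2.1.1)]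
    · have hpre : τ <+: σ := wordLe_iff.mp hle
      have hσne : σ ≠ [] := by
        intro h; subst h
        exact hτσ (List.prefix_nil.mp hpre)
      have hlen : τ.length < σ.length := by
        rcases Nat.lt_or_ge τ.length σ.length with h | h
        · exact h
        · exact absurd (hpre.eq_of_length
            (Nat.le_antisymm hpre.length_le h)) hτσ
      have hle₀ : τ ≤ σ.dropLast := by
        rw [wordLe_iff, List.prefix_iff_eq_take]
        rw [List.dropLast_eq_take, List.take_take]
        rw [Nat.min_eq_left (by omega)]
        exact List.prefix_iff_eq_take.mp hpre
      have hpre' : σ.dropLast ≤ σ := wordLe_iff.mpr σ.dropLast_prefix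
      have hhom : (homOfLE hle).op
          = (homOfLE hpre').op ≫ (homOfLE hle₀).op := homEqAux _ _
      have hcomp : Q.map (homOfLE hle).op q
          = Q.map (homOfLE hle₀).op (Q.map (homOfLE hpre').op q) := by
        rw [hhom, FunctorToTypes.map_comp_apply]
      have hdl : σ.dropLast.length ≤ N := by
        rw [List.length_dropLast]; omega
      rw [hcomp, ih σ.dropLast hdl τ hle₀ _, liftExec_step gi σ hσne q,
        List.take_take, Nat.min_eq_left (by rw [List.length_dropLast]; omega)]

end LiftNat

/-- The representable presheaf at a word `w`. -/
def repPsh (w : List A) : (List A)ᵒᵖ ⥤ Type where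
  obj σ := PLift (σ.unop ≤ w)
  map g := TypeCat.ofHom fun h => ⟨le_trans (leOfHom g.unop) h.down⟩
  map_id := by intro σ; exact ConcreteCategory.hom_ext _ _ fun h => rfl
  map_comp := by intro σ τ ρ u v; exact ConcreteCategory.hom_ext _ _ fun h => rfl

/-- The empty presheaf. -/
def emptyPsh : (List A)ᵒᵖ ⥤ Type where
  obj _ := PEmpty
  map _ := TypeCat.ofHom PEmpty.elim
  map_id := by intro σ; exact ConcreteCategory.hom_ext _ _ fun x => PEmpty.elim x
  map_comp := by intro σ τ ρ u v; exact ConcreteCategory.hom_ext _ _ fun x => PEmpty.elim x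

/-- The inclusion of representables. -/
def repIncl (w w' : List A) (hw : w ≤ w') : repPsh w ⟶ repPsh w' where
  app σ := TypeCat.ofHom fun h => ⟨le_trans h.down hw⟩
  naturality := by intro σ τ u; exact ConcreteCategory.hom_ext _ _ fun h => rfl

/-- The map from the empty presheaf. -/
def emptyTo (F : (List A)ᵒᵖ ⥤ Type) : emptyPsh ⟶ F where
  app σ := TypeCat.ofHom fun x => PEmpty.elim x
  naturality := by intro σ τ u; exact ConcreteCategory.hom_ext _ _ fun x => PEmpty.elim x

/-- The map from the representable at `[]` picking out a single state. -/
def pointPsh {Z : Type} (tr : Z → A → Z → Prop) (z : Z) :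
    repPsh ([] : List A) ⟶ ExecPsh tr where
  app σ := TypeCat.ofHom fun h => ⟨[z], by
    have hσ : σ.unop = [] := List.prefix_nil.mp (wordLe_iff.mp h.down)
    exact ⟨by simp [hσ], fun i hi hσ' => by rw [hσ] at hσ'; simp at hσ'⟩⟩
  naturality := by
    intro σ τ u; refine ConcreteCategory.hom_ext _ _ fun h => ?_; apply Subtype.ext
    exact (List.take_of_length_le (by exact Nat.le_add_left 1 _)).symm

open Classical in
/-- The map from the representable at `[a]` picking out a single transition. -/
noncomputable def reflPsh {Z : Type} (tr : Z → A → Z → Prop) (a : A)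
    (z₀ z₁ : Z) (h01 : tr z₀ a z₁) : repPsh [a] ⟶ ExecPsh tr where
  app σ := TypeCat.ofHom fun h =>
    if hσ : σ.unop = [] then
      ⟨[z₀], ⟨by simp [hσ], fun i hi hσ' => by rw [hσ] at hσ'; simp at hσ'⟩⟩
    else
      ⟨[z₀, z₁], by
        have ha : σ.unop = [a] := by
          have hp := wordLe_iff.mp h.down
          refine hp.eq_of_length ?_
          have h1 := hp.length_le
          have h2 : σ.unop.length ≠ 0 := by
            simpa [List.length_eq_zero_iff] using hσ
          simp at h1 ⊢; omega
        refine ⟨by simp [ha], ?_⟩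
        intro i hi hσ'
        have hi0 : i = 0 := by rw [ha] at hσ'; simpa using hσ'
        subst hi0
        simpa [ha] using h01⟩
  naturality := by
    intro σ τ u; refine ConcreteCategory.hom_ext _ _ fun h => ?_; apply Subtype.ext
    show ((if hσ : τ.unop = [] then _ else _ : {s : List Z // IsExec tr τ.unop s})).1
      = List.take (τ.unop.length + 1)
        ((if hσ : σ.unop = [] then _ else _ : {s : List Z // IsExec tr σ.unop s})).1
    by_cases h1 : τ.unop = []
    · rw [dif_pos h1]
      by_cases h2 : σ.unop = []
      · rw [dif_pos h2]; simp [ExecPsh, h1]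
      · rw [dif_neg h2]; simp [ExecPsh, h1]
    · have hle' : τ.unop ≤ σ.unop := leOfHom u.unop
      have h2 : σ.unop ≠ [] := by
        intro hc
        exact h1 (List.prefix_nil.mp (hc ▸ wordLe_iff.mp hle'))
      rw [dif_neg h1, dif_neg h2]
      have h3 : τ.unop.length ≠ 0 := by simpa [List.length_eq_zero_iff] using h1
      exact (List.take_of_length_le (by simp; omega)).symm

theorem reflPsh_app_nil {Z : Type} (tr : Z → A → Z → Prop) (a : A)
    (z₀ z₁ : Z) (h01 : tr z₀ a z₁) (σ : (List A)ᵒᵖ) (h : (repPsh [a]).obj σ)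
    (hσ : σ.unop = []) :
    ((reflPsh tr a z₀ z₁ h01).app σ h).1 = [z₀] := by
  dsimp only [reflPsh, TypeCat.ofHom_apply]; simp [hσ]

theorem reflPsh_app_cons {Z : Type} (tr : Z → A → Z → Prop) (a : A)
    (z₀ z₁ : Z) (h01 : tr z₀ a z₁) (σ : (List A)ᵒᵖ) (h : (repPsh [a]).obj σ)
    (hσ : σ.unop ≠ []) :
    ((reflPsh tr a z₀ z₁ h01).app σ h).1 = [z₀, z₁] := by
  dsimp only [reflPsh, TypeCat.ofHom_apply]; simp [hσ]
/-- for a simulation function `f : X → Y`, the induced presheaf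
map `⟦f⟧` on executions is a bisimulation map (has the right lifting property
against all monomorphisms of presheaves on `(A*, ⪯)`) iff `f` is surjective and
reflects transitions. -/
theorem execPshMap_bisimulation_iff
    (trX : X → A → X → Prop) (trY : Y → A → Y → Prop) (f : X → Y)
    (hf : ∀ x a x', trX x a x' → trY (f x) a (f x')) :
    (∀ {P Q : (List A)ᵒᵖ ⥤ Type} (g : P ⟶ Q) [Mono g]
      (m : P ⟶ ExecPsh trX) (n : Q ⟶ ExecPsh trY),
      m ≫ execPshMap f hf = g ≫ n →
      ∃ k : Q ⟶ ExecPsh trX, g ≫ k = m ∧ k ≫ execPshMap f hf = n) ↔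
    (Function.Surjective f ∧
      ∀ x a y, trY (f x) a y → ∃ x', trX x a x' ∧ f x' = y) := by
  constructor
  · intro hlift
    constructor
    · -- surjectivity via lifting against the empty presheaf
      intro y
      let g0 : emptyPsh ⟶ repPsh ([] : List A) := emptyTo _
      haveI : ∀ σ, Mono (g0.app σ) :=
        fun σ => (mono_iff_injective _).mpr (fun a b hh => PEmpty.elim a)
      haveI : Mono g0 := NatTrans.mono_of_mono_app g0
      obtain ⟨k, hk1, hk2⟩ := hlift g0 (emptyTo (ExecPsh trX))
        (pointPsh trY y)
        (by apply NatTrans.ext; funext σ; exact ConcreteCategory.hom_ext _ _ fun x => PEmpty.elim x)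
      set q0 : (repPsh ([] : List A)).obj (op ([] : List A)) :=
        PLift.up (le_refl _) with hq0
      have hlen : (k.app (op ([] : List A)) q0).1.length = 1 :=
        (k.app (op ([] : List A)) q0).2.1
      obtain ⟨x0, hx0⟩ := List.length_eq_one_iff.mp hlen
      have hk2' := congr_arg Subtype.val
        (ConcreteCategory.congr_hom (NatTrans.congr_app hk2 (op ([] : List A))) q0)
      change List.map f (k.app (op ([] : List A)) q0).1 = [y] at hk2'
      rw [hx0] at hk2'
      exact ⟨x0, by simpa using hk2'⟩
    · -- transition reflection via lifting against representables
      intro x a y hxy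
      let g1 : repPsh ([] : List A) ⟶ repPsh [a] :=
        repIncl _ _ (wordLe_iff.mpr List.nil_prefix)
      haveI : ∀ σ, Mono (g1.app σ) :=
        fun σ => (mono_iff_injective _).mpr
          (fun u v hh => by change PLift _ at u v; cases u; cases v; rfl)
      haveI : Mono g1 := NatTrans.mono_of_mono_app g1
      obtain ⟨k, hk1, hk2⟩ := hlift g1 (pointPsh trX x)
        (reflPsh trY a (f x) y hxy)
        (by
          apply NatTrans.ext; funext σ; refine ConcreteCategory.hom_ext _ _ fun h => ?_
          apply Subtype.ext
          have hσ : σ.unop = [] := List.prefix_nil.mp (wordLe_iff.mp h.down)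
          show List.map f [x]
            = ((reflPsh trY a (f x) y hxy).app σ (g1.app σ h)).1
          rw [reflPsh_app_nil trY a (f x) y hxy σ (g1.app σ h) hσ]
          simp)
      set qa : (repPsh [a]).obj (op [a]) := PLift.up (le_refl _) with hqa
      have hlen : (k.app (op [a]) qa).1.length = 2 :=
        (k.app (op [a]) qa).2.1
      obtain ⟨x0, x1, hx01⟩ := List.length_eq_two.mp hlen
      have hex : IsExec trX [a] [x0, x1] := by
        rw [← hx01]; exact (k.app (op [a]) qa).2
      have htrans : trX x0 a x1 := by
        have := hex.2 0 (by simp) (by simp)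
        simpa using this
      -- the image condition
      have hk2' := congr_arg Subtype.val
        (ConcreteCategory.congr_hom (NatTrans.congr_app hk2 (op [a])) qa)
      change List.map f (k.app (op [a]) qa).1 = ((reflPsh trY a (f x) y hxy).app (op [a]) qa).1 at hk2'
      rw [hx01, reflPsh_app_cons trY a (f x) y hxy (op [a]) qa
        (by simp)] at hk2'
      simp at hk2'
      -- the first state is x
      have hnil : ([] : List A) ≤ [a] := wordLe_iff.mpr List.nil_prefix
      have hnat := congr_arg Subtype.val
        (ConcreteCategory.congr_hom (k.naturality (homOfLE hnil).op) qa)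
      simp only [types_comp_apply] at hnat
      have himg : (repPsh [a]).map (homOfLE hnil).op qa
          = g1.app (op ([] : List A)) (PLift.up (le_refl _)) := rfl
      rw [himg] at hnat
      have hm1 := congr_arg Subtype.val
        (ConcreteCategory.congr_hom (NatTrans.congr_app hk1 (op ([] : List A)))
          (PLift.up (le_refl ([] : List A)) : (repPsh ([] : List A)).obj (op ([] : List A))))
      change (k.app (op ([] : List A)) (g1.app _ (PLift.up (le_refl _)))).1 = [x] at hm1
      rw [hm1] at hnat
      -- hnat : [x] = take 1 [x0, x1]
      change [x] = List.take (([] : List A).length + 1) (k.app (op [a]) qa).1 at hnat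
      rw [hx01] at hnat
      simp at hnat
      refine ⟨x1, ?_, hk2'.2⟩
      rwa [← hnat] at htrans
  · rintro ⟨hs, hr⟩
    intro P Q g hg m n hsq
    have gi : ∀ σ', Function.Injective (g.app σ') := fun σ' =>
      (mono_iff_injective _).mp (((NatTrans.mono_iff_mono_app g).mp hg) σ')
    refine ⟨{
        app := fun σ => TypeCat.ofHom fun q =>
          ⟨(liftExec trX trY f hf hs hr g m n hsq σ.unop q).1,
            (liftExec trX trY f hf hs hr g m n hsq σ.unop q).2.1⟩,
        naturality := by
          intro σ τ h
          refine ConcreteCategory.hom_ext _ _ fun q => ?_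
          apply Subtype.ext
          have hhom : h = (homOfLE (leOfHom h.unop)).op := homEqAux _ _
          rw [hhom]
          exact liftExec_nat gi σ.unop.length σ.unop le_rfl τ.unop
            (leOfHom h.unop) q }, ?_, ?_⟩
    · apply NatTrans.ext; funext σ; refine ConcreteCategory.hom_ext _ _ fun p => ?_
      apply Subtype.ext
      exact liftExec_img gi σ.unop p
    · apply NatTrans.ext; funext σ; refine ConcreteCategory.hom_ext _ _ fun q => ?_
      apply Subtype.ext
      exact (liftExec trX trY f hf hs hr g m n hsq σ.unop q).2.2
end

section
/- The kernel relation of a branching bisimulation function is a branching bisimulation relation containing the given pair: if f : X → Y is a branching bisimulation function between transition systems with silent moves, then the relation R = {(x, x') : f(x) = f(x')} is a branching bisimulation relation on X. -/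
variable {X Y A : Type}

/-- Zero or more silent (`τ = none`) steps. -/
def Silent {X A : Type} (tr : X → Option A → X → Prop) : X → X → Prop :=
  Relation.ReflTransGen (fun x x' => tr x none x')

/-- A branching bisimulation function `f : X → Y`. -/
def BranchingBisimFun (trX : X → Option A → X → Prop) (trY : Y → Option A → Y → Prop)
    (f : X → Y) : Prop :=
  Function.Surjective f ∧
  -- (1) simulation of observable transitions
  (∀ x x' (a : A), trX x (some a) x' → trY (f x) (some a) (f x')) ∧
  -- (2) (possible) simulation of silent transitions
  (∀ x x', trX x none x' → f x = f x' ∨ trY (f x) none (f x')) ∧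
  -- (3) stuttering of silent transitions
  (∀ x₁ x₂ x₃, Silent trX x₁ x₂ → Silent trX x₂ x₃ → f x₁ = f x₃ → f x₁ = f x₂) ∧
  -- (4) weak reflection of transitions
  (∀ x y (a : Option A), trY (f x) a y →
    ∃ x' x'', Silent trX x x' ∧ trX x' a x'' ∧ f x' = f x ∧ f x'' = y)

/-- A branching bisimulation relation. -/
def BranchingBisimRel (tr : X → Option A → X → Prop) (R : X → X → Prop) : Prop :=
  Symmetric R ∧
  ∀ x₁ x₂ y₁ (a : Option A), tr x₁ a x₂ → R x₁ y₁ →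
    (a = none ∧ R x₂ y₁) ∨
    ∃ y y₂, Silent tr y₁ y ∧ tr y a y₂ ∧ R x₁ y ∧ R x₂ y₂

theorem BranchingBisimFun.stutter_or_trans {trX : X → Option A → X → Prop}
    {trY : Y → Option A → Y → Prop} {f : X → Y} (hf : BranchingBisimFun trX trY f)
    {x x' : X} {a : Option A} (h : trX x a x') :
    (a = none ∧ f x = f x') ∨ trY (f x) a (f x') := by
  cases a with
  | none => exact (hf.2.2.1 x x' h).imp (⟨rfl, ·⟩) id
  | some a => exact Or.inr (hf.2.1 x x' a h)

/-- the kernel relation of a branching bisimulation function is a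
branching bisimulation relation. -/
theorem kernel_of_branching_bisim_function_is_branching_bisim
    (trX : X → Option A → X → Prop) (trY : Y → Option A → Y → Prop)
    (f : X → Y) (hf : BranchingBisimFun trX trY f) :
    BranchingBisimRel trX (fun x x' => f x = f x') := by
  refine ⟨fun _ _ h => h.symm, fun x₁ x₂ y₁ a htr hR => ?_⟩
  rcases hf.stutter_or_trans htr with ⟨rfl, hstutter⟩ | hstep
  · exact Or.inl ⟨rfl, hstutter.symm.trans hR⟩
  · rw [hR] at hstep
    obtain ⟨y, y₂, hsilent, hy_step, hy, hy₂⟩ := hf.2.2.2.2 y₁ (f x₂) a hstep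
    exact Or.inr ⟨y, y₂, hsilent, hy_step, hR.trans hy.symm, hy₂.symm⟩
end

section
/- The kernel of a fair bisimulation function is a ∀-fair bisimulation relation: if f is a fair bisimulation function from a fair transition system (X, A, →, F_X) to (Y, A, →, F_Y), then R = {(x, x') ∈ X × X : f(x) = f(x')} is an equivalence relation satisfying: (1) if x →^a x' and x R y, then there exists y' with y →^a y' and x' R y'; and (2) if p and q are infinite executions with equal domain that are pointwise R-related on finite prefixes, and p is fair, then q is fair. -/
variable {X Y A : Type}

/-- Infinite execution along the infinite trace `σ` (states at finite prefixes). -/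
def IsInfExec {X A : Type} (tr : X → A → X → Prop) (σ : ℕ → A) (p : ℕ → X) : Prop :=
  ∀ i, tr (p i) (σ i) (p (i + 1))

/-- Prefix order on finite executions. -/
def FinLE {X A : Type} (e e' : List A × List X) : Prop :=
  e.1 <+: e'.1 ∧ e.2 <+: e'.2

/-- A finite execution is a prefix of an infinite execution. -/
def FinLEInf {X A : Type} (e : List A × List X) (σ : ℕ → A) (p : ℕ → X) : Prop :=
  (∀ i (h : i < e.1.length), e.1[i] = σ i) ∧ (∀ i (h : i < e.2.length), e.2[i] = p i)

/-- Elements of `fexec X`: finite executions or infinite (fair) executions. -/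
def GExec (X A : Type) : Type := (List A × List X) ⊕ ((ℕ → A) × (ℕ → X))

/-- The prefix order on `fexec X`. -/
def GLE {X A : Type} : GExec X A → GExec X A → Prop
  | .inl e, .inl e' => FinLE e e'
  | .inl e, .inr i => FinLEInf e i.1 i.2
  | .inr i, .inr i' => i = i'
  | .inr _, .inl _ => False

/-- Membership in `fexec X` = finite executions together with *fair* infinite
executions. -/
def GValid {X A : Type} (tr : X → A → X → Prop) (F : (ℕ → A) → (ℕ → X) → Prop) :
    GExec X A → Prop
  | .inl e => IsExec tr e.1 e.2
  | .inr i => IsInfExec tr i.1 i.2 ∧ F i.1 i.2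

/-- `g` is the supremum in `fexec X` of the chain `c` of finite executions. -/
def IsSupOf {X A : Type} (tr : X → A → X → Prop) (F : (ℕ → A) → (ℕ → X) → Prop)
    (c : ℕ → List A × List X) (g : GExec X A) : Prop :=
  GValid tr F g ∧ (∀ i, GLE (.inl (c i)) g) ∧
  ∀ g', GValid tr F g' → (∀ i, GLE (.inl (c i)) g') → GLE g g'

/-- Postcomposition with `f` on (finite or infinite) executions. -/
def gmap {X Y A : Type} (f : X → Y) : GExec X A → GExec Y A
  | .inl e => .inl (e.1, e.2.map f)
  | .inr i => .inr (i.1, f ∘ i.2)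

/-- Fair simulation function: preserves transitions and fairness. -/
def FairSim {X Y A : Type} (trX : X → A → X → Prop) (trY : Y → A → Y → Prop)
    (FX : (ℕ → A) → (ℕ → X) → Prop) (FY : (ℕ → A) → (ℕ → Y) → Prop)
    (f : X → Y) : Prop :=
  (∀ x a x', trX x a x' → trY (f x) a (f x')) ∧
  (∀ σ p, IsInfExec trX σ p → FX σ p → FY σ (f ∘ p))

/-- Fair bisimulation function: a surjective fair simulation reflecting
transitions and satisfying the Kleene equality
`⊔ᵢ (f ∘ pᵢ) ≈ f ∘ ⊔ᵢ pᵢ` for increasing chains of finite executions. -/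
def FairBisimFn {X Y A : Type} (trX : X → A → X → Prop) (trY : Y → A → Y → Prop)
    (FX : (ℕ → A) → (ℕ → X) → Prop) (FY : (ℕ → A) → (ℕ → Y) → Prop)
    (f : X → Y) : Prop :=
  Function.Surjective f ∧ FairSim trX trY FX FY f ∧
  (∀ x a y, trY (f x) a y → ∃ x', trX x a x' ∧ f x' = y) ∧
  ∀ c : ℕ → List A × List X,
    (∀ i, IsExec trX (c i).1 (c i).2) → (∀ i, FinLE (c i) (c (i + 1))) →
    (((∃ g, IsSupOf trY FY (fun i => ((c i).1, (c i).2.map f)) g) ↔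
        (∃ g, IsSupOf trX FX c g)) ∧
      ∀ g, IsSupOf trX FX c g →
        IsSupOf trY FY (fun i => ((c i).1, (c i).2.map f)) (gmap f g))

/-- The `i`-th finite prefix of an infinite execution has `i` steps and `i + 1` states. -/
def prefixChain {X A : Type} (σ : ℕ → A) (p : ℕ → X) (i : ℕ) : List A × List X :=
  ((List.range i).map σ, (List.range (i + 1)).map p)

section PrefixChain

variable {σ : ℕ → A} {p : ℕ → X}

lemma IsInfExec.isExec_prefixChain {tr : X → A → X → Prop} (hp : IsInfExec tr σ p)
    (i : ℕ) : IsExec tr (prefixChain σ p i).1 (prefixChain σ p i).2 := by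
  refine ⟨by simp [prefixChain], fun k _ _ => ?_⟩
  simpa only [prefixChain, List.getElem_map, List.getElem_range] using hp k

lemma prefixChain_finLE_succ (σ : ℕ → A) (p : ℕ → X) (i : ℕ) :
    FinLE (prefixChain σ p i) (prefixChain σ p (i + 1)) := by
  constructor <;> exact List.IsPrefix.map _ ⟨[_], List.range_succ.symm⟩

lemma prefixChain_map (f : X → Y) (i : ℕ) :
    ((prefixChain σ p i).1, (prefixChain σ p i).2.map f) = prefixChain σ (f ∘ p) i := by
  simp [prefixChain]

lemma prefixChain_le_inr (σ : ℕ → A) (p : ℕ → X) (i : ℕ) :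
    GLE (.inl (prefixChain σ p i)) (.inr (σ, p) : GExec X A) := by
  constructor <;> intro k hk <;> simp [prefixChain] at hk ⊢

/-- The prefix chain has no finite upper bound, and its only infinite one is `(σ, p)`. -/
lemma eq_inr_of_forall_prefixChain_le {g : GExec X A}
    (hub : ∀ i, GLE (.inl (prefixChain σ p i)) g) : g = .inr (σ, p) := by
  rcases g with e | ⟨σ', p'⟩
  · have := ((hub e.2.length).2).length_le
    simp [prefixChain] at this
  · have hlt (k : ℕ) : k < (prefixChain σ p (k + 1)).1.length ∧
        k < (prefixChain σ p (k + 1)).2.length := by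
      simp [prefixChain]
    have hσ : σ' = σ := funext fun k => by
      simpa [prefixChain] using ((hub (k + 1)).1 k (hlt k).1).symm
    have hp : p' = p := funext fun k => by
      simpa [prefixChain] using ((hub (k + 1)).2 k (hlt k).2).symm
    rw [hσ, hp]

lemma isSupOf_prefixChain {tr : X → A → X → Prop} {F : (ℕ → A) → (ℕ → X) → Prop}
    (hp : IsInfExec tr σ p) (hF : F σ p) : IsSupOf tr F (prefixChain σ p) (.inr (σ, p)) :=
  ⟨⟨hp, hF⟩, prefixChain_le_inr σ p,
    fun _ _ hub => by rw [eq_inr_of_forall_prefixChain_le hub]; rfl⟩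

lemma fair_of_isSupOf_prefixChain {tr : X → A → X → Prop}
    {F : (ℕ → A) → (ℕ → X) → Prop} {g : GExec X A}
    (hg : IsSupOf tr F (prefixChain σ p) g) : F σ p := by
  obtain ⟨hvalid, hub, -⟩ := hg
  rw [eq_inr_of_forall_prefixChain_le hub] at hvalid
  exact hvalid.2

end PrefixChain

namespace FairBisimFn

variable {trX : X → A → X → Prop} {trY : Y → A → Y → Prop}
  {FX : (ℕ → A) → (ℕ → X) → Prop} {FY : (ℕ → A) → (ℕ → Y) → Prop} {f : X → Y}

lemma exists_trans_of_eq (hf : FairBisimFn trX trY FX FY f) {x x' y : X} {a : A}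
    (hx : trX x a x') (hxy : f x = f y) : ∃ y', trX y a y' ∧ f x' = f y' := by
  obtain ⟨y', hy', hfy'⟩ := hf.2.2.1 y a (f x') (hxy ▸ hf.2.1.1 x a x' hx)
  exact ⟨y', hy', hfy'.symm⟩

/-- `p` is fair, so its prefix chain has a supremum in `X`; the Kleene equality gives one for
the common image chain in `Y`, hence one for the prefix chain of `q`, which must be `q`. -/
lemma fair_of_comp_eq (hf : FairBisimFn trX trY FX FY f) {σ : ℕ → A} {p q : ℕ → X}
    (hp : IsInfExec trX σ p) (hq : IsInfExec trX σ q) (hpq : f ∘ p = f ∘ q) (hFp : FX σ p) :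
    FX σ q := by
  have hsup_p := hf.2.2.2 _ hp.isExec_prefixChain (prefixChain_finLE_succ σ p)
  have hsup_q := hf.2.2.2 _ hq.isExec_prefixChain (prefixChain_finLE_succ σ q)
  simp only [prefixChain_map, hpq] at hsup_p hsup_q
  obtain ⟨g, hg⟩ := hsup_q.1.mp ⟨_, hsup_p.2 _ (isSupOf_prefixChain hp hFp)⟩
  exact fair_of_isSupOf_prefixChain hg

end FairBisimFn

/-- the kernel of a fair bisimulation function is a ∀-fair
bisimulation relation: an equivalence relation transferring transitions and
fairness of pointwise-related infinite executions. -/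
theorem kernel_of_fair_bisim_is_forall_fair_bisim
    (trX : X → A → X → Prop) (trY : Y → A → Y → Prop)
    (FX : (ℕ → A) → (ℕ → X) → Prop) (FY : (ℕ → A) → (ℕ → Y) → Prop)
    (f : X → Y) (hf : FairBisimFn trX trY FX FY f) :
    Equivalence (fun x x' : X => f x = f x') ∧
    (∀ x x' y a, trX x a x' → f x = f y →
      ∃ y', trX y a y' ∧ f x' = f y') ∧
    (∀ (σ : ℕ → A) (p q : ℕ → X), IsInfExec trX σ p → IsInfExec trX σ q →
      (∀ i, f (p i) = f (q i)) → FX σ p → FX σ q) :=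
  ⟨⟨fun _ => rfl, Eq.symm, Eq.trans⟩,
    fun _ _ _ _ hx hxy => hf.exists_trans_of_eq hx hxy,
    fun _ _ _ hp hq hpq => hf.fair_of_comp_eq hp hq (funext hpq)⟩
end

section
/- ∀-fair bisimulation relations (as symmetric relations) are not closed under union: there exists a fair transition system with Streett fairness constraints and two ∀-fair bisimulation relations R₁, R₂ on it such that R₁ ∪ R₂ is not a ∀-fair bisimulation relation. -/
/-- `p` visits the set `S` infinitely often. -/
def InfOften {X : Type} (p : ℕ → X) (S : Set X) : Prop :=
  ∀ n, ∃ m, n ≤ m ∧ p m ∈ S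

/-- The fairness predicate `F` is given by a Streett condition: a family of
pairs `(Eᵢ, Fᵢ)` of sets of states such that an infinite execution is fair iff
for each `i`, if it visits `Eᵢ` infinitely often then it visits `Fᵢ`
infinitely often. -/
def IsStreett {X A : Type} (F : (ℕ → A) → (ℕ → X) → Prop) : Prop :=
  ∃ (I : Type) (pairs : I → Set X × Set X),
    ∀ σ p, F σ p ↔ ∀ i, InfOften p (pairs i).1 → InfOften p (pairs i).2

/-- A ∀-fair bisimulation (as a symmetric relation). -/
def AllFairBisim {X A : Type} (tr : X → A → X → Prop)
    (F : (ℕ → A) → (ℕ → X) → Prop) (R : X → X → Prop) : Prop :=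
  Symmetric R ∧
  (∀ x x' y a, tr x a x' → R x y → ∃ y', tr y a y' ∧ R x' y') ∧
  (∀ (σ : ℕ → A) (p q : ℕ → X), IsInfExec tr σ p → IsInfExec tr σ q →
    (∀ i, R (p i) (q i)) → F σ p → F σ q)

/-! The system has two components `{x₁, y₁}` and `{x₂, y₂}`, each a complete `a`-loop, and an
execution is fair iff in each component it visits `xᵢ` infinitely often exactly when it visits `yᵢ`
infinitely often. Swapping the two components, and swapping them while also exchanging `x` with
`y`, are automorphisms of this system, so their graphs are ∀-fair bisimulations. Their union,
however, relates the fair execution `x₁ y₁ x₁ y₁ …` (use the first swap at even positions and the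
second at odd ones) to the constant execution `x₂ x₂ x₂ …`, which is unfair. -/

open Filter Function

theorem infOften_iff_frequently {X : Type} {p : ℕ → X} {S : Set X} :
    InfOften p S ↔ ∃ᶠ n in atTop, p n ∈ S :=
  frequently_atTop.symm

theorem infOften_const_iff {X : Type} {x : X} {S : Set X} :
    InfOften (fun _ => x) S ↔ x ∈ S := by
  rw [infOften_iff_frequently, frequently_const]

theorem InfOften.exists_mem {X : Type} {p : ℕ → X} {S : Set X} (h : InfOften p S) :
    ∃ n, p n ∈ S :=
  let ⟨m, _, hm⟩ := h 0
  ⟨m, hm⟩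

theorem Function.Involutive.infOften_comp_singleton_iff {X : Type} {f : X → X}
    (hf : Involutive f) {p : ℕ → X} {s : X} :
    InfOften (f ∘ p) {s} ↔ InfOften p {f s} := by
  simp only [infOften_iff_frequently, comp_apply, Set.mem_singleton_iff, hf.eq_iff]

theorem isStreett_of_forall_iff {X A ι : Type} {F : (ℕ → A) → (ℕ → X) → Prop}
    (E G : ι → Set X) (hF : ∀ σ p, F σ p ↔ ∀ i, (InfOften p (E i) ↔ InfOften p (G i))) :
    IsStreett F :=
  ⟨ι × Bool, fun ib => cond ib.2 (E ib.1, G ib.1) (G ib.1, E ib.1), fun σ p => by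
    simp only [hF, Prod.forall, Bool.forall_bool, cond_true, cond_false, iff_def, and_comm]⟩

theorem Function.Involutive.allFairBisim_graph {X A : Type} {tr : X → A → X → Prop}
    {F : (ℕ → A) → (ℕ → X) → Prop} {f : X → X} (hf : Involutive f)
    (htr : ∀ x a x', tr x a x' → tr (f x) a (f x')) (hF : ∀ σ p, F σ p → F σ (f ∘ p)) :
    AllFairBisim tr F (fun x y => y = f x) := by
  refine ⟨fun x y hxy => hxy ▸ (hf x).symm, ?_, ?_⟩
  · rintro x x' y a hxx' rfl
    exact ⟨f x', htr x a x' hxx', rfl⟩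
  · intro σ p q _ _ hpq hp
    obtain rfl : q = f ∘ p := funext hpq
    exact hF σ p hp

theorem not_allFairBisim_of_fair_of_not_fair {X A : Type} {tr : X → A → X → Prop}
    {F : (ℕ → A) → (ℕ → X) → Prop} {R : X → X → Prop} {σ : ℕ → A} {p q : ℕ → X}
    (hp : IsInfExec tr σ p) (hq : IsInfExec tr σ q) (hpq : ∀ i, R (p i) (q i))
    (hp_fair : F σ p) (hq_unfair : ¬ F σ q) :
    ¬ AllFairBisim tr F R :=
  fun hR => hq_unfair (hR.2.2 σ p q hp hq hpq hp_fair)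

namespace TwoLoops

/-- `(c, false)` is the state `x_c` and `(c, true)` is `y_c`. -/
abbrev State : Type := Bool × Bool

def sameComponent (s : State) (_ : Unit) (t : State) : Prop := s.1 = t.1

def fair (_ : ℕ → Unit) (p : ℕ → State) : Prop :=
  ∀ c, InfOften p {(c, false)} ↔ InfOften p {(c, true)}

theorem isStreett_fair : IsStreett fair :=
  isStreett_of_forall_iff (fun c => {(c, false)}) (fun c => {(c, true)}) fun _ _ => Iff.rfl

def swapComponent (s : State) : State := (!s.1, s.2)

def swapBoth (s : State) : State := (!s.1, !s.2)

theorem involutive_swapComponent : Involutive swapComponent := fun _ => by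
  simp [swapComponent]

theorem involutive_swapBoth : Involutive swapBoth := fun _ => by
  simp [swapBoth]

theorem allFairBisim_swapComponent :
    AllFairBisim sameComponent fair (fun x y => y = swapComponent x) :=
  involutive_swapComponent.allFairBisim_graph
    (fun _ _ _ h => congrArg (!·) h)
    fun _ _ hp c => by
      simpa only [involutive_swapComponent.infOften_comp_singleton_iff, swapComponent] using hp (!c)

theorem allFairBisim_swapBoth :
    AllFairBisim sameComponent fair (fun x y => y = swapBoth x) :=
  involutive_swapBoth.allFairBisim_graph
    (fun _ _ _ h => congrArg (!·) h)
    fun _ _ hp c => by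
      simpa only [involutive_swapBoth.infOften_comp_singleton_iff, swapBoth, Bool.not_false,
        Bool.not_true] using (hp (!c)).symm

def alternating (n : ℕ) : State := (false, n.bodd)

theorem infOften_alternating (l : Bool) : InfOften alternating {(false, l)} := fun n =>
  ⟨Nat.bit l n, by cases l <;> simp [Nat.bit] <;> omega, by simp [alternating, Nat.bodd_bit]⟩

theorem not_infOften_alternating (l : Bool) : ¬ InfOften alternating {(true, l)} := fun h => by
  obtain ⟨n, hn⟩ := h.exists_mem
  simp [alternating] at hn

theorem fair_alternating : fair (fun _ => ()) alternating := by
  rintro (_ | _)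
  · exact iff_of_true (infOften_alternating _) (infOften_alternating _)
  · exact iff_of_false (not_infOften_alternating _) (not_infOften_alternating _)

theorem not_fair_const : ¬ fair (fun _ => ()) (fun _ => (true, false)) := fun h => by
  simpa [infOften_const_iff] using h true

theorem alternating_related_const (n : ℕ) :
    (true, false) = swapComponent (alternating n) ∨ (true, false) = swapBoth (alternating n) := by
  cases h : n.bodd <;> simp [swapComponent, swapBoth, alternating, h]

end TwoLoops

open TwoLoops in
/-- ∀-fair bisimulation relations are not closed under union:
there are a fair transition system whose fairness predicate is a Streett
condition and ∀-fair bisimulations `R₁, R₂` on it whose union is not a ∀-fair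
bisimulation. -/
theorem forall_fair_bisim_not_closed_under_union :
    ∃ (X A : Type) (tr : X → A → X → Prop)
      (F : (ℕ → A) → (ℕ → X) → Prop) (R₁ R₂ : X → X → Prop),
      IsStreett F ∧
      AllFairBisim tr F R₁ ∧ AllFairBisim tr F R₂ ∧
      ¬ AllFairBisim tr F (fun x y => R₁ x y ∨ R₂ x y) :=
  ⟨State, Unit, sameComponent, fair, _, _, isStreett_fair, allFairBisim_swapComponent,
    allFairBisim_swapBoth,
    not_allFairBisim_of_fair_of_not_fair (p := alternating) (q := fun _ => (true, false))
      (fun _ => rfl) (fun _ => rfl) alternating_related_const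
      fair_alternating not_fair_const⟩
end

section
/- If symmetry but not transitivity is required in the definition of ∀-fair bisimulation, the resulting relations are not closed under transitive closure: there exists a fair transition system and a symmetric relation R satisfying the ∀-fair bisimulation transfer properties whose transitive closure violates the fairness transfer property. -/
/-- The transition-transfer property of ∀-fair bisimulations. -/
def Transfer1 {X A : Type} (tr : X → A → X → Prop) (R : X → X → Prop) : Prop :=
  ∀ x x' y a, tr x a x' → R x y → ∃ y', tr y a y' ∧ R x' y'

/-- The fairness-transfer property of ∀-fair bisimulations: pointwise-related
infinite executions with equal domains are both fair or both unfair. -/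
def Transfer2 {X A : Type} (tr : X → A → X → Prop)
    (F : (ℕ → A) → (ℕ → X) → Prop) (R : X → X → Prop) : Prop :=
  ∀ (σ : ℕ → A) (p q : ℕ → X), IsInfExec tr σ p → IsInfExec tr σ q →
    (∀ i, R (p i) (q i)) → F σ p → F σ q

namespace FairBisimCounterexample

def natStep (u : ℕ) (_ : Unit) (v : ℕ) : Prop := v = u ∨ v = u + 1

def Adjacent (u v : ℕ) : Prop := u = v ∨ u = v + 1 ∨ v = u + 1

instance : Std.Refl Adjacent := ⟨fun _ => Or.inl rfl⟩

theorem adjacent_symmetric : Symmetric Adjacent := by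
  unfold Adjacent
  intro u v
  omega

theorem transfer1_natStep_adjacent : Transfer1 natStep Adjacent := by
  unfold Transfer1 natStep Adjacent
  intro x x' y _ hstep hadj
  by_cases hup : y + 1 ≤ x'
  · exact ⟨y + 1, by omega, by omega⟩
  · exact ⟨y, by omega, by omega⟩

theorem transfer2_unbounded_adjacent {A : Type} (tr : ℕ → A → ℕ → Prop) :
    Transfer2 tr (fun _ p => ¬ BddAbove (Set.range p)) Adjacent := by
  rintro σ p q - - hadj hp ⟨b, hb⟩
  refine hp ⟨b + 1, ?_⟩
  rintro _ ⟨k, rfl⟩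
  have hqk : q k ≤ b := hb ⟨k, rfl⟩
  have hpq := hadj k
  unfold Adjacent at hpq
  omega

theorem transGen_adjacent (u v : ℕ) : Relation.TransGen Adjacent u v :=
  transGen_of_succ_of_refl Adjacent (fun _ _ => Or.inr (Or.inr rfl))
    (fun _ _ => Or.inr (Or.inl rfl))

theorem not_transfer2_unbounded_transGen_adjacent :
    ¬ Transfer2 natStep (fun _ p => ¬ BddAbove (Set.range p)) (Relation.TransGen Adjacent) := by
  intro htransfer
  refine htransfer (fun _ => ()) id (fun _ => 0) (fun _ => Or.inr rfl) (fun _ => Or.inl rfl)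
    (fun i => transGen_adjacent i 0) ?_ ?_
  · simp only [Set.range_id, not_bddAbove_univ, not_false_eq_true]
  · simp only [Set.range_const, bddAbove_singleton]

end FairBisimCounterexample

/-- if only symmetry (not transitivity) is required of ∀-fair
bisimulations, they are not closed under transitive closure: there are a fair
transition system and a symmetric relation `R` satisfying both transfer
properties whose transitive closure violates the fairness transfer property. -/
theorem forall_fair_bisim_not_closed_under_transitive_closure :
    ∃ (X A : Type) (tr : X → A → X → Prop)
      (F : (ℕ → A) → (ℕ → X) → Prop) (R : X → X → Prop),
      Symmetric R ∧ Transfer1 tr R ∧ Transfer2 tr F R ∧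
      ¬ Transfer2 tr F (Relation.TransGen R) :=
  open FairBisimCounterexample in
  ⟨ℕ, Unit, natStep, fun _ p => ¬ BddAbove (Set.range p), Adjacent,
    adjacent_symmetric, transfer1_natStep_adjacent, transfer2_unbounded_adjacent natStep,
    not_transfer2_unbounded_transGen_adjacent⟩
end

section
/- A branching simulation function maps minimal executions to minimal executions: if f : X → Y is a branching simulation function and p is a minimal execution of X with observable trace ϱ, then the induced execution p_f of Y is minimal with observable trace ϱ. -/
variable {X Y A : Type}

/-- The hiding map erasing the silent action `τ = none`. -/
def hide {A : Type} (σ : List (Option A)) : List A := σ.reduceOption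

/-- Minimal execution at observable trace `ϱ`. -/
def MinExec {X A : Type} (tr : X → Option A → X → Prop) (ϱ : List A)
    (σ : List (Option A)) (s : List X) : Prop :=
  IsExec tr σ s ∧ hide σ = ϱ ∧
  ∀ σ' s', IsExec tr σ' s' → σ' <+: σ → s' <+: s → hide σ' = ϱ →
    σ' = σ ∧ s' = s

/-- A branching simulation function. -/
def BranchingSim (trX : X → Option A → X → Prop) (trY : Y → Option A → Y → Prop)
    (f : X → Y) : Prop :=
  (∀ x x' (a : A), trX x (some a) x' → trY (f x) (some a) (f x')) ∧
  (∀ x x', trX x none x' → f x = f x' ∨ trY (f x) none (f x')) ∧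
  (∀ x₁ x₂ x₃, Silent trX x₁ x₂ → Silent trX x₂ x₃ → f x₁ = f x₃ → f x₁ = f x₂)

/-- The inductive definition of the induced execution `p_f`: `Lift f σ s σ' s'`
says that the execution of `Y` with trace `σ'` and states `s'` is obtained from
the execution of `X` with trace `σ` and states `s` by the clauses defining
`p_f`: the empty execution at `x` maps to the empty execution at `f x`; a
visible `a`-extension extends the image by `a`; a silent extension extends the
image by `τ` when the `f`-images of the endpoints differ, and leaves the image
unchanged when they coincide. -/
inductive Lift {X Y A : Type} (f : X → Y) :
    List (Option A) → List X → List (Option A) → List Y → Prop where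
  | nil (x : X) : Lift f [] [x] [] [f x]
  | vis {σ s σ' s'} (a : A) (x : X) :
      Lift f σ s σ' s' →
      Lift f (σ ++ [some a]) (s ++ [x]) (σ' ++ [some a]) (s' ++ [f x])
  | tau_eq {σ s σ' s'} (x xl : X) :
      Lift f σ s σ' s' → s.getLast? = some xl → f x = f xl →
      Lift f (σ ++ [none]) (s ++ [x]) σ' s'
  | tau_ne {σ s σ' s'} (x xl : X) :
      Lift f σ s σ' s' → s.getLast? = some xl → f x ≠ f xl →
      Lift f (σ ++ [none]) (s ++ [x]) (σ' ++ [none]) (s' ++ [f x])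

/-! Minimality of an execution says exactly that no proper prefix of its word has the observable
trace `ϱ`. The prefix of length `k` of the word of `p_f` has the same observable trace as the
prefix of the word of `p` ending just before the step of `p` that produces the `(k+1)`-st step of
`p_f`; so a proper prefix of `p_f` with trace `ϱ` would give one of `p`. -/

section Exec

variable {tr : X → Option A → X → Prop} {σ : List (Option A)} {s : List X}

lemma isExec_append_singleton {a : Option A} {x : X} :
    IsExec tr (σ ++ [a]) (s ++ [x]) ↔
      IsExec tr σ s ∧ ∃ xl, s.getLast? = some xl ∧ tr xl a x := by
  constructor
  · rintro ⟨hlen, htr⟩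
    simp only [List.length_append, List.length_singleton] at hlen
    have hs : s.length = σ.length + 1 := by omega
    have hne : s ≠ [] := List.ne_nil_of_length_pos (by omega)
    refine ⟨⟨hs, fun i hi hσ => ?_⟩, s.getLast hne, List.getLast?_eq_some_getLast hne, ?_⟩
    · have h := htr i (by simp; omega) (by simp; omega)
      rwa [List.getElem_append_left (by omega), List.getElem_append_left (by omega),
        List.getElem_append_left (by omega)] at h
    · simpa [List.getElem_append, List.getLast_eq_getElem, hs] using
        htr σ.length (by simp; omega) (by simp)
  · rintro ⟨⟨hlen, htr⟩, xl, hxl, hstep⟩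
    refine ⟨by simp [hlen], fun i hi hσ => ?_⟩
    simp only [List.length_append, List.length_singleton] at hσ
    rcases Nat.lt_or_ge i σ.length with h | h
    · rw [List.getElem_append_left (by omega), List.getElem_append_left (by omega),
        List.getElem_append_left (by omega)]
      exact htr i (by omega) h
    · obtain rfl : i = σ.length := by omega
      have hlast : s[σ.length]'(by omega) = xl := by
        simpa [List.getLast?_eq_getElem?, hlen] using hxl
      simpa [List.getElem_append, hlen, hlast] using hstep

lemma IsExec.take (h : IsExec tr σ s) (j : ℕ) :
    IsExec tr (σ.take j) (s.take (j + 1)) := by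
  obtain ⟨hlen, htr⟩ := h
  refine ⟨by simp [hlen], fun i hi hσ => ?_⟩
  simp only [List.length_take] at hi hσ
  simpa using htr i (by omega) (by omega)

lemma minExec_iff {ϱ : List A} :
    MinExec tr ϱ σ s ↔ IsExec tr σ s ∧ hide σ = ϱ ∧ ∀ k < σ.length, hide (σ.take k) ≠ ϱ := by
  refine and_congr_right fun hexec => and_congr_right fun _ => ⟨?_, ?_⟩
  · intro hmin k hk hhide
    have := (hmin _ _ (hexec.take k) (List.take_prefix _ _) (List.take_prefix _ _) hhide).1
    exact (congrArg List.length this).not_lt (by simpa using hk)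
  · intro hproper σ' s' hexec' hσ hs hhide
    rcases hσ.length_le.lt_or_eq with hlt | heq
    · exact absurd (List.prefix_iff_eq_take.mp hσ ▸ hhide) (hproper _ hlt)
    · refine ⟨hσ.eq_of_length heq, hs.eq_of_length ?_⟩
      rw [hexec'.1, hexec.1, heq]

end Exec

namespace Lift

variable {f : X → Y} {σ : List (Option A)} {s : List X} {σ' : List (Option A)} {s' : List Y}

lemma hide_eq (h : Lift f σ s σ' s') : hide σ' = hide σ := by
  induction h <;> simp_all [hide, List.reduceOption_append]

lemma getLast?_eq (h : Lift f σ s σ' s') : s'.getLast? = s.getLast?.map f := by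
  induction h with
  | tau_eq x xl _ hxl hfx ih => simp [ih, hxl, hfx]
  | _ => simp

lemma isExec {trX : X → Option A → X → Prop} {trY : Y → Option A → Y → Prop}
    (hvis : ∀ x x' (a : A), trX x (some a) x' → trY (f x) (some a) (f x'))
    (htau : ∀ x x', trX x none x' → f x = f x' ∨ trY (f x) none (f x'))
    (h : Lift f σ s σ' s') (hexec : IsExec trX σ s) : IsExec trY σ' s' := by
  induction h with
  | nil x => exact ⟨rfl, fun i _ hσ => by simp at hσ⟩
  | vis a x h ih =>
    obtain ⟨hexec, xl, hxl, hstep⟩ := isExec_append_singleton.mp hexec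
    exact isExec_append_singleton.mpr
      ⟨ih hexec, f xl, by simp [h.getLast?_eq, hxl], hvis _ _ _ hstep⟩
  | tau_eq x xl h _ _ ih => exact ih (isExec_append_singleton.mp hexec).1
  | tau_ne x xl h hxl hne ih =>
    obtain ⟨hexec, xl', hxl', hstep⟩ := isExec_append_singleton.mp hexec
    obtain rfl : xl' = xl := Option.some_injective _ (hxl'.symm.trans hxl)
    have hstep' := (htau _ _ hstep).resolve_left (Ne.symm hne)
    exact isExec_append_singleton.mpr
      ⟨ih hexec, f xl', by simp [h.getLast?_eq, hxl'], hstep'⟩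

lemma exists_hide_take_eq (h : Lift f σ s σ' s') {k : ℕ} (hk : k < σ'.length) :
    ∃ j < σ.length, hide (σ.take j) = hide (σ'.take k) := by
  induction h generalizing k with
  | nil => simp at hk
  | tau_eq x xl h _ _ ih =>
    obtain ⟨j, hj, hjk⟩ := ih hk
    exact ⟨j, by simp; omega, by rwa [List.take_append_of_le_length (by omega)]⟩
  | @vis σ s σ' s' a x h ih | @tau_ne σ s σ' s' x xl h _ _ ih =>
    simp only [List.length_append, List.length_singleton] at hk
    rcases Nat.lt_succ_iff_lt_or_eq.mp hk with hk | rfl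
    · obtain ⟨j, hj, hjk⟩ := ih hk
      refine ⟨j, by simp; omega, ?_⟩
      rwa [List.take_append_of_le_length (by omega), List.take_append_of_le_length (by omega)]
    · exact ⟨σ.length, by simp, by simp [h.hide_eq]⟩

end Lift

/-- a branching simulation function maps minimal executions to
minimal executions: if `p` is a minimal execution of `X` with observable trace
`ϱ`, then the induced execution `p_f` of `Y` is minimal with observable
trace `ϱ`. -/
theorem branching_sim_preserves_minimal_executions
    (trX : X → Option A → X → Prop) (trY : Y → Option A → Y → Prop)
    (f : X → Y) (hf : BranchingSim trX trY f) (ϱ : List A)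
    (σ : List (Option A)) (s : List X) (σ' : List (Option A)) (s' : List Y)
    (hmin : MinExec trX ϱ σ s) (hlift : Lift f σ s σ' s') :
    MinExec trY ϱ σ' s' := by
  obtain ⟨hvis, htau, -⟩ := hf
  rw [minExec_iff] at hmin ⊢
  obtain ⟨hexec, hhide, hproper⟩ := hmin
  refine ⟨hlift.isExec hvis htau hexec, hlift.hide_eq ▸ hhide, fun k hk => ?_⟩
  obtain ⟨j, hj, hjk⟩ := hlift.exists_hide_take_eq hk
  exact hjk ▸ hproper j hj
end
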